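/- Let δ > 0 and let v : ℝ × 𝕋 → ℝ be a smooth function such that v(t, ·) is mean-zero for every t and v satisfies the renormalized intermediate long wave equation ∂_t v(t, x) = (T_δ ∂_x² v(t, ·))(x) + ∂_x(v(t, ·)²)(x) for all (t, x). Let F(t, ·) be the mean-zero primitive of v(t, ·). Then F satisfies ∂_t F(t, x) = (H ∂_x² F(t, ·))(x) + (Q_δ v(t, ·))(x) + v(t, x)² − P₀(v(t, ·)²) for all (t, x). -/

import Mathlib

open MeasureTheory intervalIntegral Set

/-- The hyperbolic cotangent `coth x = (eˣ + e⁻ˣ)/(eˣ − e⁻ˣ)`, for `x ≠ 0`. -/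
noncomputable def cothR (x : ℝ) : ℝ :=
  (Real.exp x + Real.exp (-x)) / (Real.exp x - Real.exp (-x))

/-- The `n`-th Fourier coefficient of a (2π-periodic) function `f : ℝ → ℂ`:
`f̂(n) = (2π)⁻¹ ∫_0^{2π} e^{−inx} f(x) dx`. -/
noncomputable def fCoef (f : ℝ → ℂ) (n : ℤ) : ℂ :=
  (1 / (2 * (Real.pi : ℂ))) * ∫ x in (0 : ℝ)..(2 * Real.pi), Complex.exp (-Complex.I * n * x) * f x

/-- The Fourier multiplier operator with symbol `θ`, realized through the Fourier series. -/
noncomputable def mulOp (θ : ℤ → ℂ) (f : ℝ → ℂ) (x : ℝ) : ℂ :=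
  ∑' n : ℤ, θ n * fCoef f n * Complex.exp (Complex.I * n * x)

/-- Symbol `i n² coth(δn)` of `T_δ ∂ₓ²` (vanishing at `n = 0`). -/
noncomputable def TdSym (δ : ℝ) (n : ℤ) : ℂ :=
  if n = 0 then 0 else Complex.I * (n : ℂ) ^ 2 * (cothR (δ * n) : ℂ)

/-- Symbol `n (coth(δn) − sgn n)` of `Q_δ = (T_δ − H)∂ₓ` (vanishing at `n = 0`). -/
noncomputable def QdSym (δ : ℝ) (n : ℤ) : ℂ :=
  if n = 0 then 0 else (((n : ℝ) * (cothR (δ * n) - Real.sign n) : ℝ) : ℂ)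

/-- Symbol `i n |n|` of `H ∂ₓ²`, `H` being the Hilbert transform. -/
noncomputable def HSym (n : ℤ) : ℂ := Complex.I * (n : ℂ) * ((|(n : ℝ)| : ℝ) : ℂ)

lemma cothR_eq {x : ℝ} (hx : x ≠ 0) :
    cothR x = (Real.exp (2*x) + 1) / (Real.exp (2*x) - 1) := by
  unfold cothR
  have h1 : Real.exp x ≠ 0 := (Real.exp_pos x).ne'
  have h2 : Real.exp (2*x) = Real.exp x * Real.exp x := by
    rw [two_mul, Real.exp_add]
  have h3 : Real.exp (-x) = (Real.exp x)⁻¹ := Real.exp_neg x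
  have h4 : Real.exp x - (Real.exp x)⁻¹ ≠ 0 := by
    rcases hx.lt_or_gt with h | h
    · have := Real.exp_lt_one_iff.mpr h
      have h5 : (1:ℝ) < (Real.exp x)⁻¹ := by
        rw [lt_inv_comm₀] <;> [skip; norm_num; exact Real.exp_pos x]
        simpa using this
      nlinarith [Real.exp_pos x]
    · have := Real.exp_lt_exp.mpr (neg_lt_self h)
      rw [h3] at this; nlinarith
  rw [h2, h3, div_eq_div_iff h4]
  · ring_nf
    field_simp
    ring
  · intro hcon
    have : Real.exp (2*x) = 1 := by rw [h2]; linarith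
    have h6 : (2*x) = 0 := Real.exp_injective (by rw [this, Real.exp_zero])
    have : x = 0 := by linarith
    exact hx this

lemma one_le_cothR {x : ℝ} (hx : 0 < x) : 1 ≤ cothR x := by
  rw [cothR_eq hx.ne']
  have h1 : (1:ℝ) < Real.exp (2*x) := by have := Real.exp_lt_exp.mpr (show (0:ℝ) < 2*x by linarith); simpa using this
  rw [le_div_iff₀ (by linarith)]; linarith

lemma cothR_antitone {x y : ℝ} (hx : 0 < x) (hxy : x ≤ y) : cothR y ≤ cothR x := by
  have hy : 0 < y := lt_of_lt_of_le hx hxy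
  rw [cothR_eq hx.ne', cothR_eq hy.ne']
  have h1 : (1:ℝ) < Real.exp (2*x) := by have := Real.exp_lt_exp.mpr (show (0:ℝ) < 2*x by linarith); simpa using this
  have h2 : Real.exp (2*x) ≤ Real.exp (2*y) := Real.exp_le_exp.mpr (by linarith)
  rw [div_le_div_iff₀ (by linarith) (by linarith)]
  nlinarith

lemma cothR_neg (x : ℝ) : cothR (-x) = - cothR x := by
  unfold cothR
  rw [neg_neg, show Real.exp (-x) - Real.exp x = -(Real.exp x - Real.exp (-x)) by ring,
    div_neg, add_comm]

lemma abs_cothR_le {δ : ℝ} (hδ : 0 < δ) {n : ℤ} (hn : n ≠ 0) :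
    |cothR (δ * n)| ≤ cothR δ := by
  have key : ∀ m : ℤ, 0 < m → |cothR (δ * m)| ≤ cothR δ := by
    intro m hm
    have h1 : δ ≤ δ * m := by
      have : (1:ℝ) ≤ (m:ℝ) := by exact_mod_cast hm
      nlinarith
    rw [abs_of_nonneg (by linarith [one_le_cothR (lt_of_lt_of_le hδ h1)])]
    exact cothR_antitone hδ h1
  rcases hn.lt_or_gt with h | h
  · have : δ * (n:ℝ) = -(δ * ((-n : ℤ) : ℝ)) := by push_cast; ring
    rw [this, cothR_neg, abs_neg]
    exact key (-n) (by omega)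
  · exact key n h


lemma norm_cexp_I_mul (n : ℤ) (x : ℝ) : ‖Complex.exp (Complex.I * n * x)‖ = 1 := by
  rw [Complex.norm_exp]
  have : (Complex.I * (n:ℂ) * (x:ℝ)).re = 0 := by
    simp [Complex.mul_re, Complex.mul_im]
  rw [this, Real.exp_zero]

lemma norm_cexp_neg_I_mul (n : ℤ) (x : ℝ) : ‖Complex.exp (-Complex.I * n * x)‖ = 1 := by
  rw [Complex.norm_exp]
  have : (-Complex.I * (n:ℂ) * (x:ℝ)).re = 0 := by
    simp [Complex.mul_re, Complex.mul_im]
  rw [this, Real.exp_zero]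

lemma periodic_deriv (g : ℝ → ℝ) {c : ℝ} (hper : Function.Periodic g c) :
    Function.Periodic (deriv g) c := by
  intro x
  have h1 : deriv (fun y => g (y + c)) x = deriv g (x + c) := deriv_comp_add_const g c x
  rw [← h1]
  congr 1
  ext y
  exact hper y

lemma norm_fCoef_le (h : ℝ → ℂ) (M : ℝ)
    (hM : ∀ y ∈ Set.uIcc (0:ℝ) (2*Real.pi), ‖h y‖ ≤ M) (n : ℤ) : ‖fCoef h n‖ ≤ M := by
  have h2π : (0:ℝ) < 2 * Real.pi := by positivity
  unfold fCoef
  rw [norm_mul]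
  have hb : ‖∫ x in (0:ℝ)..(2*Real.pi), Complex.exp (-Complex.I*n*x) * h x‖
      ≤ M * |2*Real.pi - 0| := by
    apply intervalIntegral.norm_integral_le_of_norm_le_const
    intro y hy
    rw [norm_mul, norm_cexp_neg_I_mul n y, one_mul]
    exact hM y (Set.uIoc_subset_uIcc hy)
  have hn : ‖(1 / (2 * (Real.pi:ℂ)))‖ = 1/(2*Real.pi) := by
    rw [show (2 * (Real.pi:ℂ)) = ((2*Real.pi : ℝ) : ℂ) by push_cast; ring, norm_div, norm_one,
      Complex.norm_real, Real.norm_of_nonneg h2π.le]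
  rw [hn]
  calc 1/(2*Real.pi) * ‖_‖ ≤ 1/(2*Real.pi) * (M * |2*Real.pi - 0|) := by
        apply mul_le_mul_of_nonneg_left hb (by positivity)
    _ = M := by rw [abs_of_nonneg (by linarith)]; field_simp; ring

lemma hasDerivAt_cexp_mul (c : ℂ) (y : ℝ) :
    HasDerivAt (fun x : ℝ => Complex.exp (c * x)) (c * Complex.exp (c * y)) y := by
  have h1 : HasDerivAt (fun z : ℂ => Complex.exp (c * z)) (c * Complex.exp (c * y)) (y : ℂ) := by
    have h2 : HasDerivAt (fun z : ℂ => c * z) c (y:ℂ) := by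
      simpa using (hasDerivAt_id (y:ℂ)).const_mul c
    simpa [mul_comm] using h2.cexp
  exact h1.comp_ofReal

lemma fCoef_deriv (g : ℝ → ℝ) (hg : ContDiff ℝ (⊤:ℕ∞) g)
    (hper : Function.Periodic g (2*Real.pi)) (n : ℤ) :
    fCoef (fun y => ((deriv g y : ℝ) : ℂ)) n
      = Complex.I * n * fCoef (fun y => ((g y : ℝ) : ℂ)) n := by
  have hgd : Differentiable ℝ g := hg.differentiable (by simp)
  have hgc : Continuous fun y => ((g y : ℝ) : ℂ) := Complex.continuous_ofReal.comp hg.continuous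
  have hg'c : Continuous fun y => ((deriv g y : ℝ) : ℂ) :=
    Complex.continuous_ofReal.comp (hg.continuous_deriv (by exact_mod_cast le_top))
  have hu : ∀ y : ℝ, HasDerivAt (fun x : ℝ => Complex.exp (-Complex.I * n * x))
      ((-Complex.I * n) * Complex.exp (-Complex.I * n * y)) y := fun y =>
    hasDerivAt_cexp_mul _ y
  have hv : ∀ y : ℝ, HasDerivAt (fun y => ((g y : ℝ):ℂ)) ((deriv g y : ℝ):ℂ) y := fun y =>
    (hgd y).hasDerivAt.ofReal_comp
  have IBP := intervalIntegral.integral_mul_deriv_eq_deriv_mul (a := 0) (b := 2*Real.pi)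
      (fun y _ => hu y) (fun y _ => hv y)
      ((continuous_const.mul (Complex.continuous_exp.comp
        (continuous_const.mul Complex.continuous_ofReal))).intervalIntegrable _ _)
      (hg'c.intervalIntegrable _ _)
  have hb1 : Complex.exp (-Complex.I * n * ((2*Real.pi : ℝ):ℂ)) = 1 := by
    have : -Complex.I * n * ((2*Real.pi : ℝ):ℂ) = ((-n : ℤ):ℂ) * (2 * Real.pi * Complex.I) := by
      push_cast; ring
    rw [this, Complex.exp_int_mul_two_pi_mul_I]
  have hb2 : g (2*Real.pi) = g 0 := by
    have := hper 0; rwa [zero_add] at this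
  unfold fCoef
  rw [IBP, hb1, hb2]
  simp only [Complex.ofReal_zero, mul_zero, Complex.exp_zero, one_mul]
  have : (∫ y in (0:ℝ)..(2*Real.pi), (-Complex.I * n) * Complex.exp (-Complex.I*n*y) * ((g y:ℝ):ℂ))
      = (-Complex.I * n) * ∫ y in (0:ℝ)..(2*Real.pi), Complex.exp (-Complex.I*n*y) * ((g y:ℝ):ℂ) := by
    rw [← intervalIntegral.integral_const_mul]
    congr 1; ext y; ring
  rw [this]
  ring

lemma periodic_iterate_deriv (g : ℝ → ℝ) {c : ℝ} (hper : Function.Periodic g c) (k : ℕ) :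
    Function.Periodic (deriv^[k] g) c := by
  induction k with
  | zero => exact hper
  | succ k ih =>
    rw [Function.iterate_succ_apply']
    exact periodic_deriv _ ih

lemma fCoef_iter (g : ℝ → ℝ) (hg : ContDiff ℝ (⊤:ℕ∞) g) (hper : Function.Periodic g (2*Real.pi))
    (k : ℕ) (n : ℤ) :
    fCoef (fun y => ((deriv^[k] g y : ℝ) : ℂ)) n
      = (Complex.I * n)^k * fCoef (fun y => ((g y : ℝ) : ℂ)) n := by
  induction k with
  | zero => simp
  | succ k ih =>
    have hgk : ContDiff ℝ (⊤:ℕ∞) (deriv^[k] g) := hg.iterate_deriv k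
    have hpk : Function.Periodic (deriv^[k] g) (2*Real.pi) := periodic_iterate_deriv g hper k
    simp only [Function.iterate_succ_apply']
    rw [fCoef_deriv _ hgk hpk, ih]
    ring

lemma norm_I_mul_int (n : ℤ) : ‖Complex.I * (n:ℂ)‖ = |(n:ℝ)| := by
  rw [norm_mul, Complex.norm_I, one_mul]
  rw [show ((n:ℂ)) = (((n:ℝ)):ℂ) by push_cast; ring, Complex.norm_real, Real.norm_eq_abs]

lemma fCoef_decay (g : ℝ → ℝ) (hg : ContDiff ℝ (⊤:ℕ∞) g)
    (hper : Function.Periodic g (2*Real.pi)) :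
    ∃ M : ℝ, 0 ≤ M ∧ ∀ n : ℤ, n ≠ 0 →
      ‖fCoef (fun y => ((g y : ℝ) : ℂ)) n‖ ≤ M / (n:ℝ)^4 := by
  have hg4 : Continuous (deriv^[4] g) := (hg.iterate_deriv 4).continuous
  obtain ⟨M, hM⟩ := (isCompact_uIcc (a := (0:ℝ)) (b := 2*Real.pi)).exists_bound_of_continuousOn
    (f := fun y => ((deriv^[4] g y : ℝ) : ℂ)) (Complex.continuous_ofReal.comp hg4).continuousOn
  refine ⟨M, le_trans (norm_nonneg _) (hM 0 Set.left_mem_uIcc), fun n hn => ?_⟩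
  have key := fCoef_iter g hg hper 4 n
  have hb : ‖fCoef (fun y => ((deriv^[4] g y : ℝ) : ℂ)) n‖ ≤ M := norm_fCoef_le _ M hM n
  rw [key, norm_mul, norm_pow, norm_I_mul_int] at hb
  have hn' : ((n:ℝ)) ≠ 0 := Int.cast_ne_zero.mpr hn
  have h4 : |(n:ℝ)|^4 = (n:ℝ)^4 := by
    rw [pow_abs, abs_of_nonneg (by positivity)]
  rw [h4] at hb
  rw [le_div_iff₀ (by positivity)]
  linarith [hb]

lemma summable_of_decay {h : ℤ → ℂ} {K : ℝ} (hb : ∀ n : ℤ, n ≠ 0 → ‖h n‖ ≤ K / (n:ℝ)^2) :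
    Summable h := by
  apply Summable.of_norm_bounded_eventually (g := fun n : ℤ => K * (1/(n:ℝ)^2))
  · exact ((Real.summable_one_div_int_pow (p := 2)).mpr one_lt_two).mul_left K
  · rw [Filter.eventually_cofinite]
    apply Set.Finite.subset (Set.finite_singleton (0:ℤ))
    intro n hn
    simp only [Set.mem_setOf_eq, not_le] at hn
    by_contra hn0
    simp only [Set.mem_singleton_iff] at hn0
    have := hb n hn0
    rw [mul_one_div] at hn
    linarith

lemma partialT_hasDerivAt (G : ℝ → ℝ → ℝ) (hG : ContDiff ℝ (⊤:ℕ∞) (Function.uncurry G))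
    (s y : ℝ) :
    HasDerivAt (fun s' => G s' y) (fderiv ℝ (Function.uncurry G) (s, y) (1, 0)) s := by
  have h1 : HasFDerivAt (Function.uncurry G) (fderiv ℝ (Function.uncurry G) (s, y)) (s, y) :=
    (hG.differentiable (by simp) (s, y)).hasFDerivAt
  have h2 : HasDerivAt (fun s' : ℝ => ((s' : ℝ), y)) ((1:ℝ), (0:ℝ)) s :=
    (hasDerivAt_id s).prodMk (hasDerivAt_const s y)
  exact h1.comp_hasDerivAt s h2

lemma partialT_continuous (G : ℝ → ℝ → ℝ) (hG : ContDiff ℝ (⊤:ℕ∞) (Function.uncurry G)) :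
    Continuous (fun p : ℝ × ℝ => fderiv ℝ (Function.uncurry G) p (1, 0)) :=
  (hG.continuous_fderiv (by simp)).clm_apply continuous_const

lemma hasDerivAt_param_integral (G : ℝ → ℝ → ℝ)
    (hG : ContDiff ℝ (⊤:ℕ∞) (Function.uncurry G)) (a b t : ℝ) :
    HasDerivAt (fun s => ∫ y in a..b, G s y)
      (∫ y in a..b, fderiv ℝ (Function.uncurry G) (t, y) (1, 0)) t := by
  have hDc := partialT_continuous G hG
  obtain ⟨C, hC⟩ := (((isCompact_Icc (a := t-1) (b := t+1)).prod
    (isCompact_uIcc (a := a) (b := b)))).exists_bound_of_continuousOn hDc.continuousOn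
  have cont_slice : ∀ s : ℝ, Continuous (G s) := fun s =>
    hG.continuous.comp (continuous_const.prodMk continuous_id)
  refine (intervalIntegral.hasDerivAt_integral_of_dominated_loc_of_deriv_le
    (F := fun s y => G s y) (F' := fun s y => fderiv ℝ (Function.uncurry G) (s, y) (1, 0))
    (bound := fun _ => C) (s := Metric.ball t 1) (Metric.ball_mem_nhds t one_pos) ?_ ?_ ?_ ?_ ?_ ?_).2
  · exact Filter.Eventually.of_forall (fun s => (cont_slice s).aestronglyMeasurable)
  · exact (cont_slice t).intervalIntegrable a b
  · exact (hDc.comp (continuous_const.prodMk continuous_id)).aestronglyMeasurable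
  · refine Filter.Eventually.of_forall (fun y hy x hx => ?_)
    apply hC
    constructor
    · rw [Metric.mem_ball, Real.dist_eq] at hx
      constructor <;> [linarith [abs_lt.mp hx]; linarith [(abs_lt.mp hx).2]]
    · exact Set.uIoc_subset_uIcc hy
  · exact intervalIntegrable_const
  · exact Filter.Eventually.of_forall (fun y _ x _ => partialT_hasDerivAt G hG x y)

lemma intervalIntegral_tsum {f : ℤ → ℝ → ℂ} {C : ℤ → ℝ}
    (hcont : ∀ n, Continuous (f n)) (hC : ∀ n y, ‖f n y‖ ≤ C n) (hCsum : Summable C)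
    (a b : ℝ) :
    (∫ y in a..b, ∑' n, f n y) = ∑' n, ∫ y in a..b, f n y := by
  refine (intervalIntegral.hasSum_integral_of_dominated_convergence
    (bound := fun n _ => C n) (fun n => (hcont n).aestronglyMeasurable) ?_ ?_ ?_ ?_).tsum_eq.symm
  · exact fun n => Filter.Eventually.of_forall (fun y _ => hC n y)
  · exact Filter.Eventually.of_forall (fun y _ => hCsum)
  · exact intervalIntegrable_const
  · exact Filter.Eventually.of_forall (fun y _ =>
      (Summable.of_norm_bounded hCsum (fun n => hC n y)).hasSum)

lemma term_bound {θ d : ℤ → ℂ} {A M : ℝ} (hA : 0 ≤ A) (hM : 0 ≤ M)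
    (hθ0 : θ 0 = 0) (hθ : ∀ n : ℤ, n ≠ 0 → ‖θ n‖ ≤ A * (n:ℝ)^2)
    (hd : ∀ n : ℤ, n ≠ 0 → ‖d n‖ ≤ M / (n:ℝ)^4) :
    ∀ (n : ℤ) (z : ℂ), ‖z‖ = 1 → ‖θ n * d n * z‖ ≤ (A * M) * (1/(n:ℝ)^2) := by
  intro n z hz
  rcases eq_or_ne n 0 with rfl | hn
  · simp [hθ0]
  · have hn' : ((n:ℝ)) ≠ 0 := Int.cast_ne_zero.mpr hn
    have h1 : (1:ℝ) ≤ (n:ℝ)^2 := by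
      have : (1:ℝ) ≤ |(n:ℝ)| := by
        rw [show |(n:ℝ)| = ((|n| : ℤ) : ℝ) by push_cast; ring]
        exact_mod_cast Int.one_le_abs (by omega)
      nlinarith [sq_abs ((n:ℝ)), sq_nonneg (|(n:ℝ)| - 1)]
    rw [norm_mul, norm_mul, hz, mul_one]
    calc ‖θ n‖ * ‖d n‖ ≤ (A * (n:ℝ)^2) * (M / (n:ℝ)^4) := by
          apply mul_le_mul (hθ n hn) (hd n hn) (norm_nonneg _) (by positivity)
      _ = (A * M) * (1/(n:ℝ)^2) := by field_simp




noncomputable def sSym (δ : ℝ) (n : ℤ) : ℂ :=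
  if n = 0 then 0 else (n : ℂ) * ((cothR (δ * n) : ℝ) : ℂ)

lemma TdSym_eq_I_mul (δ : ℝ) (n : ℤ) : TdSym δ n = Complex.I * n * sSym δ n := by
  unfold TdSym sSym
  rcases eq_or_ne n 0 with rfl | hn
  · simp
  · rw [if_neg hn, if_neg hn]; ring

lemma abs_int_one_le {n : ℤ} (hn : n ≠ 0) : 1 ≤ |(n:ℝ)| := by
  rw [show |(n:ℝ)| = ((|n| : ℤ) : ℝ) by push_cast; ring]
  exact_mod_cast Int.one_le_abs (by omega)

lemma norm_intCast_complex (n : ℤ) : ‖((n:ℤ) : ℂ)‖ = |(n:ℝ)| := by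
  rw [show ((n:ℤ):ℂ) = (((n:ℝ)):ℂ) by push_cast; ring, Complex.norm_real, Real.norm_eq_abs]

lemma norm_sSym_le {δ : ℝ} (hδ : 0 < δ) (n : ℤ) (hn : n ≠ 0) :
    ‖sSym δ n‖ ≤ cothR δ * (n:ℝ)^2 := by
  unfold sSym
  rw [if_neg hn, norm_mul, norm_intCast_complex, Complex.norm_real, Real.norm_eq_abs]
  have h1 := abs_cothR_le hδ hn
  have h2 := abs_int_one_le hn
  have h3 : 0 ≤ cothR δ := le_trans zero_le_one (one_le_cothR hδ)
  calc |(n:ℝ)| * |cothR (δ*n)| ≤ |(n:ℝ)| * cothR δ := by nlinarith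
    _ ≤ cothR δ * (n:ℝ)^2 := by
        nlinarith [sq_abs ((n:ℝ)), mul_le_mul_of_nonneg_left h2 (abs_nonneg ((n:ℝ)))]

lemma norm_TdSym_le {δ : ℝ} (hδ : 0 < δ) (n : ℤ) (hn : n ≠ 0) :
    ‖TdSym δ n‖ ≤ cothR δ * (n:ℝ)^2 := by
  unfold TdSym
  rw [if_neg hn, norm_mul, norm_mul, Complex.norm_I, one_mul, norm_pow, norm_intCast_complex,
    Complex.norm_real, Real.norm_eq_abs]
  have h1 := abs_cothR_le hδ hn
  rw [sq_abs]
  have h3 : 0 ≤ (n:ℝ)^2 := sq_nonneg _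
  nlinarith [abs_nonneg (cothR (δ * (n:ℝ)))]

lemma norm_HSym_le (n : ℤ) (hn : n ≠ 0) : ‖HSym n‖ ≤ 1 * (n:ℝ)^2 := by
  unfold HSym
  rw [norm_mul, norm_mul, Complex.norm_I, one_mul, norm_intCast_complex, Complex.norm_real,
    Real.norm_eq_abs, abs_abs, one_mul, ← sq_abs]
  nlinarith [abs_nonneg ((n:ℝ))]

lemma abs_sign_le (r : ℝ) : |Real.sign r| ≤ 1 := by
  rcases lt_trichotomy r 0 with h | h | h
  · rw [Real.sign_of_neg h]; norm_num
  · rw [h, Real.sign_zero]; norm_num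
  · rw [Real.sign_of_pos h]; norm_num

lemma norm_QdSym_le {δ : ℝ} (hδ : 0 < δ) (n : ℤ) (hn : n ≠ 0) :
    ‖QdSym δ n‖ ≤ (cothR δ + 1) * (n:ℝ)^2 := by
  unfold QdSym
  rw [if_neg hn, Complex.norm_real, Real.norm_eq_abs, abs_mul]
  have h1 := abs_cothR_le hδ hn
  have h2 := abs_int_one_le hn
  have h3 := abs_sign_le ((n:ℝ))
  have h4 : |cothR (δ*n) - Real.sign ((n:ℝ))| ≤ cothR δ + 1 := by
    have := abs_sub_abs_le_abs_sub (cothR (δ*n)) (Real.sign ((n:ℝ)))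
    have h5 := abs_sub (cothR (δ*n)) (Real.sign ((n:ℝ)))
    calc |cothR (δ*n) - Real.sign ((n:ℝ))| ≤ |cothR (δ*n)| + |Real.sign ((n:ℝ))| :=
          abs_sub _ _
      _ ≤ cothR δ + 1 := by linarith
  calc |(n:ℝ)| * |cothR (δ*n) - Real.sign ((n:ℝ))| ≤ |(n:ℝ)| * (cothR δ + 1) := by
        apply mul_le_mul_of_nonneg_left h4 (abs_nonneg _)
    _ ≤ (cothR δ + 1) * (n:ℝ)^2 := by
        nlinarith [sq_abs ((n:ℝ)), mul_le_mul_of_nonneg_left h2 (abs_nonneg ((n:ℝ))),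
          one_le_cothR hδ]

lemma HQ_term {δ : ℝ} (n : ℤ) (cF c : ℂ) (hrel : c = Complex.I * n * cF) :
    HSym n * cF + QdSym δ n * c = sSym δ n * c := by
  rcases eq_or_ne n 0 with rfl | hn
  · unfold HSym QdSym sSym
    simp [hrel]
  · unfold HSym QdSym sSym
    rw [if_neg hn, if_neg hn, hrel]
    have hs : (|(n:ℝ)| : ℝ) = (n:ℝ) * Real.sign ((n:ℝ)) := by
      rcases hn.lt_or_gt with h | h
      · have h' : ((n:ℝ)) < 0 := by exact_mod_cast h
        rw [Real.sign_of_neg h', abs_of_neg h']; ring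
      · have h' : (0:ℝ) < (n:ℝ) := by exact_mod_cast h
        rw [Real.sign_of_pos h', abs_of_pos h']; ring
    have hsC : ((|(n:ℝ)| : ℝ) : ℂ) = ((n:ℝ):ℂ) * ((Real.sign ((n:ℝ)) : ℝ) : ℂ) := by
      rw [hs]; push_cast; ring
    push_cast
    push_cast at hsC
    linear_combination (Complex.I * (n:ℂ) * cF) * hsC

set_option maxHeartbeats 1000000 in
/-- If a smooth spatially `2π`-periodic and spatially mean-zero `v : ℝ × 𝕋 → ℝ` solves the
renormalized ILW equation `∂ₜ v = T_δ ∂ₓ² v + ∂ₓ(v²)`, and `F(t,·)` is the mean-zero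
primitive of `v(t,·)`, then `∂ₜ F = H ∂ₓ² F + Q_δ v + v² − P₀(v²)`. -/
theorem stmt12 (δ : ℝ) (hδ : 0 < δ) (v : ℝ → ℝ → ℝ)
    (hv : ContDiff ℝ (⊤ : ℕ∞) (Function.uncurry v))
    (hvper : ∀ t, Function.Periodic (v t) (2 * Real.pi))
    (hv0 : ∀ t, fCoef (fun y => (v t y : ℂ)) 0 = 0)
    (heq : ∀ t x : ℝ, (deriv (fun s => v s x) t : ℂ) =
      mulOp (TdSym δ) (fun y => (v t y : ℂ)) x + (deriv (fun y => (v t y) ^ 2) x : ℂ))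
    (F : ℝ → ℝ → ℝ)
    (hF : ContDiff ℝ (⊤ : ℕ∞) (Function.uncurry F))
    (hFper : ∀ t, Function.Periodic (F t) (2 * Real.pi))
    (hF0 : ∀ t, fCoef (fun y => (F t y : ℂ)) 0 = 0)
    (hFprim : ∀ t x : ℝ, deriv (F t) x = v t x) :
    ∀ t x : ℝ, (deriv (fun s => F s x) t : ℂ) =
      mulOp HSym (fun y => (F t y : ℂ)) x + mulOp (QdSym δ) (fun y => (v t y : ℂ)) x +
        (v t x : ℂ) ^ 2 - fCoef (fun y => ((v t y : ℂ)) ^ 2) 0 := by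
  intro t x
  have h2π : (0:ℝ) < 2*Real.pi := by positivity
  have h2πC : ((2*Real.pi : ℝ) : ℂ) ≠ 0 := by exact_mod_cast h2π.ne'
  have hvS : ContDiff ℝ (⊤:ℕ∞) (Function.uncurry v) := hv.of_le (by simp)
  have hFS : ContDiff ℝ (⊤:ℕ∞) (Function.uncurry F) := hF.of_le (by simp)
  have hvt : ContDiff ℝ (⊤:ℕ∞) (v t) := hvS.comp (contDiff_const.prodMk contDiff_id)
  have hFt : ContDiff ℝ (⊤:ℕ∞) (F t) := hFS.comp (contDiff_const.prodMk contDiff_id)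
  set c : ℤ → ℂ := fun n => fCoef (fun y => ((v t y : ℝ):ℂ)) n with hc_def
  set cF : ℤ → ℂ := fun n => fCoef (fun y => ((F t y : ℝ):ℂ)) n with hcF_def
  have hcn : ∀ n : ℤ, fCoef (fun y => ((v t y : ℝ):ℂ)) n = c n := fun _ => rfl
  have hcFn : ∀ n : ℤ, fCoef (fun y => ((F t y : ℝ):ℂ)) n = cF n := fun _ => rfl
  obtain ⟨M, hM0, hdec0⟩ := fCoef_decay (v t) hvt (hvper t)
  have hdec : ∀ n : ℤ, n ≠ 0 → ‖c n‖ ≤ M / (n:ℝ)^4 := hdec0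
  have hrel : ∀ n : ℤ, c n = Complex.I * n * cF n := by
    intro n
    have h1 : fCoef (fun y => ((deriv (F t) y : ℝ):ℂ)) n = Complex.I * n * cF n :=
      fCoef_deriv (F t) hFt (hFper t) n
    have h2 : (fun y => ((deriv (F t) y : ℝ):ℂ)) = (fun y => ((v t y : ℝ):ℂ)) := by
      funext y; rw [hFprim]
    rw [h2] at h1
    exact h1
  have hdecF : ∀ n : ℤ, n ≠ 0 → ‖cF n‖ ≤ M / (n:ℝ)^4 := by
    intro n hn
    have h1 : ‖c n‖ ≤ M / (n:ℝ)^4 := hdec n hn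
    rw [hrel n, norm_mul, norm_mul, Complex.norm_I, one_mul, norm_intCast_complex] at h1
    have h2 := abs_int_one_le hn
    calc ‖cF n‖ = 1 * ‖cF n‖ := (one_mul _).symm
      _ ≤ |(n:ℝ)| * ‖cF n‖ := by nlinarith [norm_nonneg (cF n)]
      _ ≤ M / (n:ℝ)^4 := h1
  have hcoth1 : (1:ℝ) ≤ cothR δ := one_le_cothR hδ
  have hcoth0 : (0:ℝ) ≤ cothR δ := by linarith
  -- term bounds for the families
  have hbT := term_bound (θ := TdSym δ) (d := c) hcoth0 hM0
    (by unfold TdSym; simp) (norm_TdSym_le hδ) hdec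
  have hbS := term_bound (θ := sSym δ) (d := c) hcoth0 hM0
    (by unfold sSym; simp) (norm_sSym_le hδ) hdec
  have hbH := term_bound (θ := HSym) (d := cF) zero_le_one hM0
    (by unfold HSym; simp) norm_HSym_le hdecF
  have hbQ := term_bound (θ := QdSym δ) (d := c) (by linarith) hM0
    (by unfold QdSym; simp) (norm_QdSym_le hδ) hdec
  have hsum_base : ∀ K : ℝ, Summable (fun n : ℤ => K * (1/(n:ℝ)^2)) := fun K =>
    ((Real.summable_one_div_int_pow (p := 2)).mpr one_lt_two).mul_left K
  have sum_of : ∀ (g : ℤ → ℂ) (K : ℝ), (∀ n, ‖g n‖ ≤ K * (1/(n:ℝ)^2)) → Summable g :=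
    fun g K h => Summable.of_norm_bounded (hsum_base K) h
  have SsE : ∀ z : ℝ, Summable (fun n => sSym δ n * c n * Complex.exp (Complex.I*n*z)) :=
    fun z => sum_of _ _ (fun n => hbS n _ (norm_cexp_I_mul n z))
  have SsA : Summable (fun n => sSym δ n * c n) :=
    sum_of _ _ (fun n => by simpa using hbS n 1 norm_one)
  have SH : Summable (fun n => HSym n * cF n * Complex.exp (Complex.I*n*x)) :=
    sum_of _ _ (fun n => hbH n _ (norm_cexp_I_mul n x))
  have SQ : Summable (fun n => QdSym δ n * c n * Complex.exp (Complex.I*n*x)) :=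
    sum_of _ _ (fun n => hbQ n _ (norm_cexp_I_mul n x))
  -- partial derivative functions
  set DF : ℝ → ℝ := fun y => fderiv ℝ (Function.uncurry F) (t, y) (1, 0) with hDF_def
  set Dv : ℝ → ℝ := fun y => fderiv ℝ (Function.uncurry v) (t, y) (1, 0) with hDv_def
  have hDFd : ∀ y, HasDerivAt (fun s => F s y) (DF y) t := fun y => partialT_hasDerivAt F hFS t y
  have hDvd : ∀ y, HasDerivAt (fun s => v s y) (Dv y) t := fun y => partialT_hasDerivAt v hvS t y
  have hcontDv : Continuous Dv :=
    (partialT_continuous v hvS).comp (continuous_const.prodMk continuous_id)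
  have hFs : ∀ s, Differentiable ℝ (F s) := fun s =>
    (hFS.comp (contDiff_const.prodMk contDiff_id)).differentiable (by simp)
  have hvs : ∀ s, Continuous (v s) := fun s =>
    hvS.continuous.comp (continuous_const.prodMk continuous_id)
  -- E1: FTC in space
  have E1 : ∀ (s z : ℝ), F s z - F s 0 = ∫ u in (0:ℝ)..z, v s u := by
    intro s z
    have h1 : (∫ u in (0:ℝ)..z, v s u) = F s z - F s 0 := by
      apply intervalIntegral.integral_deriv_eq_sub' (F s) (funext (hFprim s))
        (fun u _ => (hFs s) u) ((hvs s).continuousOn)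
    linarith
  -- E3: time derivative of F slice
  have DFz_eq : ∀ z : ℝ, DF z = DF 0 + ∫ u in (0:ℝ)..z, Dv u := by
    intro z
    refine HasDerivAt.unique (hDFd z) ?_
    have h1 : (fun s => F s z) = fun s => F s 0 + ∫ u in (0:ℝ)..z, v s u := by
      funext s
      have := E1 s z; linarith
    rw [h1]
    exact (hDFd 0).add (hasDerivAt_param_integral v hvS 0 z t)
  -- complexified equation
  have hvt2 : ContDiff ℝ (⊤:ℕ∞) (fun y => v t y ^ 2) := hvt.pow 2
  have hg2c : Continuous (fun u => deriv (fun y => v t y ^ 2) u) :=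
    hvt2.continuous_deriv (by exact_mod_cast le_top)
  have heqt : ∀ u : ℝ, ((Dv u : ℝ) : ℂ)
      = mulOp (TdSym δ) (fun y => ((v t y : ℝ):ℂ)) u
        + ((deriv (fun y => v t y ^ 2) u : ℝ):ℂ) := by
    intro u
    have h := heq t u
    have h1 : deriv (fun s => ((v s u : ℝ):ℂ)) t = ((Dv u : ℝ):ℂ) :=
      ((hDvd u).ofReal_comp).deriv
    have h2 : deriv (fun y => ((v t y : ℝ):ℂ) ^ 2) u
        = ((deriv (fun y => v t y ^ 2) u : ℝ):ℂ) := by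
      have e1 : (fun y => ((v t y : ℝ):ℂ)^2) = fun y => (((v t y ^ 2 : ℝ)):ℂ) := by
        funext y; push_cast; ring
      rw [e1]
      have hd : HasDerivAt (fun y => v t y ^ 2) (deriv (fun y => v t y ^ 2) u) u :=
        ((hvt2.differentiable (by simp)) u).hasDerivAt
      exact (hd.ofReal_comp).deriv
    rw [h1, h2] at h
    exact h
  have hmulTd_eq : mulOp (TdSym δ) (fun y => ((v t y : ℝ):ℂ))
      = fun u => ((Dv u : ℝ):ℂ) - ((deriv (fun y => v t y ^ 2) u : ℝ):ℂ) := by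
    funext u
    rw [heqt u]; ring
  have hmulTd_cont : Continuous (mulOp (TdSym δ) (fun y => ((v t y : ℝ):ℂ))) := by
    rw [hmulTd_eq]
    exact (Complex.continuous_ofReal.comp hcontDv).sub (Complex.continuous_ofReal.comp hg2c)
  -- integral of complexified Dv
  have intDv : ∀ z : ℝ, ((∫ u in (0:ℝ)..z, Dv u : ℝ) : ℂ)
      = (∫ u in (0:ℝ)..z, mulOp (TdSym δ) (fun y => ((v t y : ℝ):ℂ)) u)
        + ((v t z : ℂ)^2 - (v t 0 : ℂ)^2) := by
    intro z
    rw [← intervalIntegral.integral_ofReal]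
    rw [intervalIntegral.integral_congr (g := fun u =>
      mulOp (TdSym δ) (fun y => ((v t y : ℝ):ℂ)) u
        + ((deriv (fun y => v t y ^ 2) u : ℝ):ℂ)) (fun u _ => heqt u)]
    have hg2C : Continuous (fun u : ℝ => ((deriv (fun y => v t y ^ 2) u : ℝ):ℂ)) := by
      exact Complex.continuous_ofReal.comp hg2c
    rw [intervalIntegral.integral_add (hmulTd_cont.intervalIntegrable _ _)
      (hg2C.intervalIntegrable _ _)]
    congr 1
    rw [intervalIntegral.integral_ofReal]
    have hftc : (∫ u in (0:ℝ)..z, deriv (fun y => v t y ^ 2) u) = v t z^2 - v t 0^2 := by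
      apply intervalIntegral.integral_deriv_eq_sub' _ rfl
        (fun u _ => (hvt2.differentiable (by simp)) u) hg2c.continuousOn
    rw [hftc]
    push_cast
    ring
  have hexpC : ∀ n : ℤ, Continuous (fun u : ℝ => Complex.exp (Complex.I*n*u)) := fun n =>
    Complex.continuous_exp.comp (continuous_const.mul Complex.continuous_ofReal)
  have hIn : ∀ n : ℤ, n ≠ 0 → Complex.I * (n:ℂ) ≠ 0 := by
    intro n hn
    apply mul_ne_zero Complex.I_ne_zero
    exact_mod_cast hn
  -- integral of the multiplier term
  have intMul : ∀ z : ℝ, (∫ u in (0:ℝ)..z, mulOp (TdSym δ) (fun y => ((v t y : ℝ):ℂ)) u)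
      = (∑' n : ℤ, sSym δ n * c n * Complex.exp (Complex.I*n*z))
        - (∑' n : ℤ, sSym δ n * c n) := by
    intro z
    unfold mulOp
    simp only [hcn]
    rw [intervalIntegral_tsum (f := fun n u => TdSym δ n * c n * Complex.exp (Complex.I*n*u))
      (C := fun n => (cothR δ * M) * (1/(n:ℝ)^2))
      (fun n => continuous_const.mul (hexpC n))
      (fun n u => hbT n _ (norm_cexp_I_mul n u)) (hsum_base _) 0 z]
    have hterm : ∀ n : ℤ, (∫ u in (0:ℝ)..z, TdSym δ n * c n * Complex.exp (Complex.I*n*u))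
        = sSym δ n * c n * Complex.exp (Complex.I*n*z) - sSym δ n * c n := by
      intro n
      rcases eq_or_ne n 0 with rfl | hn
      · simp [TdSym, sSym]
      · rw [intervalIntegral.integral_const_mul, integral_exp_mul_complex (hIn n hn), TdSym_eq_I_mul]
        rw [Complex.ofReal_zero, mul_zero, Complex.exp_zero]
        have hn' : ((n:ℤ):ℂ) ≠ 0 := by exact_mod_cast hn
        field_simp [Complex.I_ne_zero, hn']
    rw [tsum_congr hterm, Summable.tsum_sub (SsE z) SsA]
  -- the master formula
  have Eform : ∀ z : ℝ, ((DF z : ℝ):ℂ)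
      = (((DF 0 : ℝ):ℂ) - (∑' n : ℤ, sSym δ n * c n) - (v t 0 : ℂ)^2)
        + (∑' n : ℤ, sSym δ n * c n * Complex.exp (Complex.I*n*z)) + (v t z : ℂ)^2 := by
    intro z
    rw [DFz_eq z, Complex.ofReal_add, intDv z, intMul z]
    ring
  -- mean-zero of DF
  have hzero : (∫ y in (0:ℝ)..(2*Real.pi), DF y) = 0 := by
    have hz : ∀ s : ℝ, (∫ y in (0:ℝ)..(2*Real.pi), F s y) = 0 := by
      intro s
      have h0 := hF0 s
      unfold fCoef at h0
      simp only [Int.cast_zero, mul_zero, zero_mul, Complex.exp_zero, one_mul] at h0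
      rcases mul_eq_zero.mp h0 with h | h
      · exfalso
        rw [div_eq_zero_iff] at h
        rcases h with h | h
        · exact one_ne_zero h
        · exact h2πC (by rw [show ((2*Real.pi:ℝ):ℂ) = 2*(Real.pi:ℂ) by push_cast; ring]; exact h)
      · rw [intervalIntegral.integral_ofReal] at h
        exact_mod_cast h
    have h1 : HasDerivAt (fun s => ∫ y in (0:ℝ)..(2*Real.pi), F s y)
        (∫ y in (0:ℝ)..(2*Real.pi), DF y) t := hasDerivAt_param_integral F hFS 0 (2*Real.pi) t
    have h2 : (fun s => ∫ y in (0:ℝ)..(2*Real.pi), F s y) = fun _ => (0:ℝ) := funext hz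
    rw [h2] at h1
    exact ((hasDerivAt_const t (0:ℝ)).unique h1).symm
  -- integrate the master formula over a period
  have hK0 : (((DF 0 : ℝ):ℂ) - (∑' n : ℤ, sSym δ n * c n) - (v t 0 : ℂ)^2)
      = - fCoef (fun y => ((v t y : ℂ))^2) 0 := by
    set K0 : ℂ := ((DF 0 : ℝ):ℂ) - (∑' n : ℤ, sSym δ n * c n) - (v t 0 : ℂ)^2 with hK0_def
    have hT1cont : Continuous (fun z : ℝ => ∑' n : ℤ, sSym δ n * c n * Complex.exp (Complex.I*n*z)) := by
      apply continuous_tsum (fun n => continuous_const.mul (hexpC n)) (hsum_base (cothR δ * M))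
      exact fun n z => hbS n _ (norm_cexp_I_mul n z)
    have hv2cont : Continuous (fun z : ℝ => (v t z : ℂ)^2) := by
      exact (Complex.continuous_ofReal.comp hvt.continuous).pow 2
    have hint : (∫ z in (0:ℝ)..(2*Real.pi), ((DF z : ℝ):ℂ))
        = (∫ z in (0:ℝ)..(2*Real.pi), (K0
            + (∑' n : ℤ, sSym δ n * c n * Complex.exp (Complex.I*n*z)) + (v t z : ℂ)^2)) := by
      apply intervalIntegral.integral_congr
      intro z _
      exact Eform z
    rw [intervalIntegral.integral_ofReal, hzero] at hint
    rw [intervalIntegral.integral_add (by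
        exact ((continuous_const.add hT1cont).intervalIntegrable _ _))
      (hv2cont.intervalIntegrable _ _)] at hint
    rw [intervalIntegral.integral_add (intervalIntegrable_const)
      (hT1cont.intervalIntegrable _ _)] at hint
    rw [intervalIntegral.integral_const] at hint
    have hT1int : (∫ z in (0:ℝ)..(2*Real.pi),
        ∑' n : ℤ, sSym δ n * c n * Complex.exp (Complex.I*n*z)) = 0 := by
      rw [intervalIntegral_tsum (f := fun n z => sSym δ n * c n * Complex.exp (Complex.I*n*z))
        (C := fun n => (cothR δ * M) * (1/(n:ℝ)^2))
        (fun n => continuous_const.mul (hexpC n))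
        (fun n z => hbS n _ (norm_cexp_I_mul n z)) (hsum_base _) 0 (2*Real.pi)]
      have : ∀ n : ℤ, (∫ z in (0:ℝ)..(2*Real.pi), sSym δ n * c n * Complex.exp (Complex.I*n*z)) = 0 := by
        intro n
        rcases eq_or_ne n 0 with rfl | hn
        · simp [sSym]
        · rw [intervalIntegral.integral_const_mul, integral_exp_mul_complex (hIn n hn)]
          have hb1 : Complex.exp (Complex.I * n * ((2*Real.pi : ℝ):ℂ)) = 1 := by
            rw [show Complex.I * n * ((2*Real.pi : ℝ):ℂ) = ((n : ℤ):ℂ) * (2 * Real.pi * Complex.I)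
              by push_cast; ring]
            exact Complex.exp_int_mul_two_pi_mul_I n
          rw [hb1, Complex.ofReal_zero, mul_zero, Complex.exp_zero]
          simp
      rw [tsum_congr this, tsum_zero]
    rw [hT1int] at hint
    have hP0 : (∫ z in (0:ℝ)..(2*Real.pi), (v t z : ℂ)^2)
        = ((2*Real.pi : ℝ):ℂ) * fCoef (fun y => ((v t y : ℂ))^2) 0 := by
      unfold fCoef
      simp only [Int.cast_zero, mul_zero, zero_mul, Complex.exp_zero, one_mul]
      rw [show (2 * (Real.pi:ℂ)) = ((2*Real.pi:ℝ):ℂ) by push_cast; ring]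
      rw [← mul_assoc, mul_one_div, div_self h2πC, one_mul]
    rw [hP0] at hint
    have hsmul : ((2*Real.pi : ℝ) - 0) • K0 = ((2*Real.pi : ℝ):ℂ) * K0 := by
      rw [sub_zero, Complex.real_smul]
    rw [hsmul] at hint
    -- hint : 0 = 2π*K0 + 0 + 2π*P0
    have := hint
    simp only [Complex.ofReal_zero] at this
    apply mul_left_cancel₀ h2πC
    rw [mul_neg]
    linear_combination -this
  -- identification of the multiplier sum
  have hD : mulOp HSym (fun y => ((F t y : ℝ):ℂ)) x + mulOp (QdSym δ) (fun y => ((v t y : ℝ):ℂ)) x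
      = ∑' n : ℤ, sSym δ n * c n * Complex.exp (Complex.I*n*x) := by
    unfold mulOp
    simp only [hcn, hcFn]
    rw [← Summable.tsum_add SH SQ]
    apply tsum_congr
    intro n
    have := HQ_term (δ := δ) n (cF n) (c n) (hrel n)
    calc HSym n * cF n * Complex.exp (Complex.I*n*x)
          + QdSym δ n * c n * Complex.exp (Complex.I*n*x)
        = (HSym n * cF n + QdSym δ n * c n) * Complex.exp (Complex.I*n*x) := by ring
      _ = sSym δ n * c n * Complex.exp (Complex.I*n*x) := by rw [this]
  -- conclude
  rw [((hDFd x).ofReal_comp).deriv, Eform x, hD, hK0]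
  ring
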